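/- There is a universal constant C > 0 such that: for every k ∈ ℝ with 0 < |k| ≤ 1, every t ≥ 0, and all functions ψ, w : [−1,1] → ℂ with ψ three times continuously differentiable, w twice continuously differentiable, ψ(±1) = 0, w(±1) = 0, and ψ''(y) − k² ψ(y) = −w(y) on (−1,1), the function ψ₁ := ψ' + i k t ψ satisfies ( ‖ψ₁'‖²_{L²} + ‖ψ₁‖²_{L²} )^{1/2} ≤ C (1 + |k| t)^{−1} ( ‖(e_{k,t} w)''‖²_{L²} + ‖(e_{k,t} w)'‖²_{L²} + ‖w‖²_{L²} )^{1/2}, where e_{k,t}(y) = e^{i k y t} and derivatives of e_{k,t} w are taken in y. -/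

import Mathlib

open Set

/-- The squared `L²` norm of a function on the interval `(-1, 1)`. -/
noncomputable def L2sq (h : ℝ → ℂ) : ℝ :=
  ∫ y in (-1 : ℝ)..1, ‖h y‖ ^ 2

/-- The function `y ↦ e^{ikyt} w(y)`. -/
noncomputable def ew (k t : ℝ) (w : ℝ → ℂ) : ℝ → ℂ :=
  fun y => Complex.exp (Complex.I * (k : ℂ) * (y : ℂ) * (t : ℂ)) * w y

/-!
Write `ξ = k t`. Conjugation by `e^{iξy}` turns `∂_y` into `∂_y + iξ`, so the right-hand side
controls `w`, `A = w' + iξw` and `B = A' + iξA` in `L²`, while `ψ₁ = ψ' + iξψ`. Everything rests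
on the energy identity `‖X'‖² + k²‖X‖² = |∫ F X̄|` for `X'' - k²X = -F`, `X(±1) = 0`, together
with the Poincaré inequality `‖X‖ ≤ 2‖X'‖`.

For `|ξ| ≤ 1` they bound `ψ`, `ψ'` and hence `ψ₁`, `ψ₁' = k²ψ - w + iξψ'` by `‖w‖`. For `|ξ| ≥ 1`
subtract the corrector `w/κ`, `κ = k² + ξ²`: `R = ψ - w/κ` solves `R'' - k²R = -(2A' - B)/κ`, and
integrating the `A'` term by parts in the energy identity gives `κ‖R'‖ ≤ 2‖A‖ + 2‖B‖`. Then
`ψ₁ = R' + iξR + A/κ` and `ψ₁' = k²R + iξR' + iξA/κ`, and `|ξ| ≤ ξ² ≤ κ` yields the gain `|ξ|⁻¹`.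
-/

namespace LowFreq

open MeasureTheory Complex ComplexConjugate

noncomputable def L2norm (h : ℝ → ℂ) : ℝ := √(L2sq h)

lemma L2sq_nonneg (h : ℝ → ℂ) : 0 ≤ L2sq h :=
  intervalIntegral.integral_nonneg (by norm_num) fun _ _ => by positivity

lemma L2norm_nonneg (h : ℝ → ℂ) : 0 ≤ L2norm h := Real.sqrt_nonneg _

lemma sq_L2norm (h : ℝ → ℂ) : L2norm h ^ 2 = L2sq h := Real.sq_sqrt (L2sq_nonneg h)

lemma L2norm_zero : L2norm (fun _ => 0) = 0 := by
  simp [L2norm, L2sq]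

lemma L2sq_eq_setIntegral (h : ℝ → ℂ) : L2sq h = ∫ y in Ioc (-1 : ℝ) 1, ‖h y‖ ^ 2 :=
  intervalIntegral.integral_of_le (by norm_num)

lemma L2sq_congr {f g : ℝ → ℂ} (h : EqOn f g (Ioo (-1 : ℝ) 1)) : L2sq f = L2sq g :=
  intervalIntegral.integral_congr_Ioo_of_le (by norm_num) fun y hy => by simp only [h hy]

lemma L2norm_congr {f g : ℝ → ℂ} (h : EqOn f g (Ioo (-1 : ℝ) 1)) : L2norm f = L2norm g := by
  rw [L2norm, L2norm, L2sq_congr h]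

lemma L2norm_const_mul (c : ℂ) (f : ℝ → ℂ) : L2norm (fun y => c * f y) = ‖c‖ * L2norm f := by
  rw [L2norm, L2norm, ← Real.sqrt_sq (norm_nonneg c), ← Real.sqrt_mul (sq_nonneg _), L2sq, L2sq,
    ← intervalIntegral.integral_const_mul]
  simp only [norm_mul, mul_pow]

lemma memLp_restrict_Ioc {E : Type*} [NormedAddCommGroup E] {f : ℝ → E} (hf : Continuous f)
    (p : ENNReal) (a b : ℝ) :
    MemLp f p (volume.restrict (Ioc a b)) := by
  obtain ⟨C, hC⟩ := isCompact_Icc.exists_bound_of_continuousOn (hf.continuousOn (s := Icc a b))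
  refine MemLp.of_bound hf.aestronglyMeasurable C ?_
  exact (ae_restrict_iff' measurableSet_Ioc).2
    (.of_forall fun y hy => hC y (Ioc_subset_Icc_self hy))

lemma integral_norm_mul_le {f g : ℝ → ℂ} (hf : Continuous f) (hg : Continuous g) :
    ∫ y in (-1 : ℝ)..1, ‖f y‖ * ‖g y‖ ≤ L2norm f * L2norm g := by
  have := integral_mul_norm_le_Lp_mul_Lq Real.HolderConjugate.two_two
    (memLp_restrict_Ioc hf _ (-1) 1) (memLp_restrict_Ioc hg _ (-1) 1)
  simpa only [L2norm, L2sq_eq_setIntegral, Real.rpow_two, ← Real.sqrt_eq_rpow,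
    ← intervalIntegral.integral_of_le (show (-1 : ℝ) ≤ 1 by norm_num)] using this

lemma norm_integral_mul_conj_le {f g : ℝ → ℂ} (hf : Continuous f) (hg : Continuous g) :
    ‖∫ y in (-1 : ℝ)..1, f y * conj (g y)‖ ≤ L2norm f * L2norm g := by
  refine (intervalIntegral.norm_integral_le_integral_norm (by norm_num)).trans ?_
  simpa using integral_norm_mul_le hf hg

lemma L2norm_add_le {f g : ℝ → ℂ} (hf : Continuous f) (hg : Continuous g) :
    L2norm (fun y => f y + g y) ≤ L2norm f + L2norm g := by
  have hint : ∀ {u : ℝ → ℝ}, Continuous u → IntervalIntegrable u volume (-1) 1 :=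
    fun hu => hu.intervalIntegrable _ _
  have hexp : ∫ y in (-1 : ℝ)..1, (‖f y‖ + ‖g y‖) ^ 2
      = L2sq f + 2 * (∫ y in (-1 : ℝ)..1, ‖f y‖ * ‖g y‖) + L2sq g := by
    simp only [add_sq, mul_assoc]
    rw [intervalIntegral.integral_add (hint (by fun_prop)) (hint (by fun_prop)),
      intervalIntegral.integral_add (hint (by fun_prop)) (hint (by fun_prop)),
      intervalIntegral.integral_const_mul, L2sq, L2sq]
  have hle : L2sq (fun y => f y + g y) ≤ ∫ y in (-1 : ℝ)..1, (‖f y‖ + ‖g y‖) ^ 2 :=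
    intervalIntegral.integral_mono_on (by norm_num) (hint (by fun_prop)) (hint (by fun_prop))
      fun y _ => pow_le_pow_left₀ (norm_nonneg _) (norm_add_le _ _) 2
  refine Real.sqrt_le_iff.2 ⟨add_nonneg (L2norm_nonneg f) (L2norm_nonneg g), ?_⟩
  calc L2sq (fun y => f y + g y)
      ≤ L2sq f + 2 * (∫ y in (-1 : ℝ)..1, ‖f y‖ * ‖g y‖) + L2sq g := hexp ▸ hle
    _ ≤ L2norm f ^ 2 + 2 * (L2norm f * L2norm g) + L2norm g ^ 2 := by
      rw [sq_L2norm, sq_L2norm]; gcongr; exact integral_norm_mul_le hf hg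
    _ = (L2norm f + L2norm g) ^ 2 := by ring

lemma L2norm_const_mul_add₃_le (c₁ c₂ c₃ : ℂ) {f g h : ℝ → ℂ} (hf : Continuous f)
    (hg : Continuous g) (hh : Continuous h) :
    L2norm (fun y => c₁ * f y + c₂ * g y + c₃ * h y)
      ≤ ‖c₁‖ * L2norm f + ‖c₂‖ * L2norm g + ‖c₃‖ * L2norm h := by
  rw [← L2norm_const_mul, ← L2norm_const_mul, ← L2norm_const_mul]
  exact (L2norm_add_le (by fun_prop) (by fun_prop)).trans
    (add_le_add_left (L2norm_add_le (by fun_prop) (by fun_prop)) _)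

lemma continuous_of_forall_hasDerivAt {𝕜 E : Type*} [NontriviallyNormedField 𝕜]
    [NormedAddCommGroup E] [NormedSpace 𝕜 E] {f f' : 𝕜 → E} (hf : ∀ y, HasDerivAt f (f' y) y) :
    Continuous f :=
  continuous_iff_continuousAt.2 fun y => (hf y).continuousAt

lemma L2norm_le_two_mul_L2norm_deriv {f f' : ℝ → ℂ} (hf : ∀ y, HasDerivAt f (f' y) y)
    (hf' : Continuous f') (h₀ : f (-1) = 0) : L2norm f ≤ 2 * L2norm f' := by
  have hcont : Continuous f := continuous_of_forall_hasDerivAt hf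
  have hpt : ∀ y ∈ Icc (-1 : ℝ) 1, ‖f y‖ ≤ √2 * L2norm f' := fun y hy => calc
    ‖f y‖ = ‖∫ z in (-1 : ℝ)..y, f' z‖ := by
      rw [intervalIntegral.integral_eq_sub_of_hasDerivAt (fun z _ => hf z)
        (hf'.intervalIntegrable _ _), h₀, sub_zero]
    _ ≤ ∫ z in (-1 : ℝ)..y, ‖f' z‖ := intervalIntegral.norm_integral_le_integral_norm hy.1
    _ ≤ ∫ z in (-1 : ℝ)..1, ‖f' z‖ * ‖(1 : ℂ)‖ := by
      simp only [norm_one, mul_one]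
      exact intervalIntegral.integral_mono_interval le_rfl hy.1 hy.2
        (.of_forall fun _ => norm_nonneg _) (hf'.norm.intervalIntegrable _ _)
    _ ≤ L2norm f' * L2norm (fun _ => 1) := integral_norm_mul_le hf' continuous_const
    _ = √2 * L2norm f' := by norm_num [L2norm, L2sq, mul_comm]
  refine Real.sqrt_le_iff.2 ⟨by positivity [L2norm_nonneg f'], ?_⟩
  calc L2sq f ≤ ∫ _ in (-1 : ℝ)..1, (√2 * L2norm f') ^ 2 :=
        intervalIntegral.integral_mono_on (by norm_num) ((hcont.norm.pow 2).intervalIntegrable _ _)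
          intervalIntegrable_const fun y hy => pow_le_pow_left₀ (norm_nonneg _) (hpt y hy) 2
    _ = (2 * L2norm f') ^ 2 := by norm_num [mul_pow]; ring

lemma integral_deriv_mul_conj {a b : ℝ} {u u' v v' : ℝ → ℂ} (hu : ∀ y, HasDerivAt u (u' y) y)
    (hv : ∀ y, HasDerivAt v (v' y) y) (hu' : Continuous u') (hv' : Continuous v')
    (ha : v a = 0) (hb : v b = 0) :
    ∫ y in a..b, u' y * conj (v y) = -∫ y in a..b, u y * conj (v' y) := by
  have := intervalIntegral.integral_mul_deriv_eq_deriv_mul (a := a) (b := b) (fun y _ => hu y)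
    (fun y _ => (hv y).star) (hu'.intervalIntegrable _ _) (hv'.star.intervalIntegrable _ _)
  simp only [star_def, ha, hb, map_zero, mul_zero, sub_zero, zero_sub] at this
  rw [this, neg_neg]

lemma integral_mul_conj_self (f : ℝ → ℂ) :
    ∫ y in (-1 : ℝ)..1, f y * conj (f y) = (L2sq f : ℂ) := by
  rw [L2sq, ← intervalIntegral.integral_ofReal]
  simp only [mul_conj, normSq_eq_norm_sq, ofReal_pow]

structure IsDirichletSolution (k : ℝ) (X X' X'' F : ℝ → ℂ) : Prop where
  hasDerivAt : ∀ y, HasDerivAt X (X' y) y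
  hasDerivAt_deriv : ∀ y, HasDerivAt X' (X'' y) y
  continuous_deriv2 : Continuous X''
  left : X (-1) = 0
  right : X 1 = 0
  eq : ∀ y ∈ Ioo (-1 : ℝ) 1, X'' y - (k : ℂ) ^ 2 * X y = -F y

lemma isDirichletSolution_of_hasDerivAt {k : ℝ} {w w' w'' : ℝ → ℂ}
    (hw : ∀ y, HasDerivAt w (w' y) y) (hw' : ∀ y, HasDerivAt w' (w'' y) y)
    (hw'' : Continuous w'') (hw₀ : w (-1) = 0) (hw₁ : w 1 = 0) :
    IsDirichletSolution k w w' w'' (fun y => (k : ℂ) ^ 2 * w y - w'' y) :=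
  ⟨hw, hw', hw'', hw₀, hw₁, fun _ _ => by ring⟩

namespace IsDirichletSolution

variable {k : ℝ} {X X' X'' F : ℝ → ℂ}

lemma continuous (h : IsDirichletSolution k X X' X'' F) : Continuous X :=
  continuous_of_forall_hasDerivAt h.hasDerivAt

lemma continuous_deriv (h : IsDirichletSolution k X X' X'' F) : Continuous X' :=
  continuous_of_forall_hasDerivAt h.hasDerivAt_deriv

lemma sub_const_mul (h : IsDirichletSolution k X X' X'' F) {W W' W'' G : ℝ → ℂ}
    (hW : IsDirichletSolution k W W' W'' G) (c : ℂ) :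
    IsDirichletSolution k (fun y => X y - c * W y) (fun y => X' y - c * W' y)
      (fun y => X'' y - c * W'' y) (fun y => F y - c * G y) where
  hasDerivAt y := (h.hasDerivAt y).sub ((hW.hasDerivAt y).const_mul c)
  hasDerivAt_deriv y := (h.hasDerivAt_deriv y).sub ((hW.hasDerivAt_deriv y).const_mul c)
  continuous_deriv2 := h.continuous_deriv2.sub (continuous_const.mul hW.continuous_deriv2)
  left := by simp [h.left, hW.left]
  right := by simp [h.right, hW.right]
  eq y hy := by linear_combination h.eq y hy - c * hW.eq y hy

lemma energy_eq (h : IsDirichletSolution k X X' X'' F) :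
    L2sq X' + k ^ 2 * L2sq X = ‖∫ y in (-1 : ℝ)..1, F y * conj (X y)‖ := by
  have hX := h.continuous
  have hX'' := h.continuous_deriv2
  have hint : ∀ {u : ℝ → ℂ}, Continuous u → IntervalIntegrable u volume (-1) 1 :=
    fun hu => hu.intervalIntegrable _ _
  have hF : ∫ y in (-1 : ℝ)..1, F y * conj (X y) = -((∫ y in (-1 : ℝ)..1, X'' y * conj (X y))
      - (k : ℂ) ^ 2 * ∫ y in (-1 : ℝ)..1, X y * conj (X y)) := by
    rw [← intervalIntegral.integral_const_mul,
      ← intervalIntegral.integral_sub (hint (by fun_prop)) (hint (by fun_prop)),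
      ← intervalIntegral.integral_neg]
    refine intervalIntegral.integral_congr_Ioo_of_le (by norm_num) fun y hy => ?_
    simp only [← mul_assoc, ← sub_mul, h.eq y hy, neg_mul, neg_neg]
  have hreal : -(-(L2sq X' : ℂ) - (k : ℂ) ^ 2 * L2sq X) = ((L2sq X' + k ^ 2 * L2sq X : ℝ) : ℂ) := by
    push_cast; ring
  rw [hF, integral_deriv_mul_conj h.hasDerivAt_deriv h.hasDerivAt hX'' h.continuous_deriv
      h.left h.right, integral_mul_conj_self, integral_mul_conj_self, hreal, norm_real,
    Real.norm_of_nonneg (add_nonneg (L2sq_nonneg _) (mul_nonneg (sq_nonneg k) (L2sq_nonneg _)))]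

/-- Integrating the `a'` part of the source by parts, only `‖a‖` enters the bound. -/
lemma L2norm_deriv_le (h : IsDirichletSolution k X X' X'' F) {a a' g : ℝ → ℂ}
    (ha : ∀ y, HasDerivAt a (a' y) y) (ha' : Continuous a') (hg : Continuous g)
    (hF : EqOn F (fun y => a' y + g y) (Ioo (-1 : ℝ) 1)) :
    L2norm X' ≤ L2norm a + 2 * L2norm g := by
  have hX := h.continuous
  have hX' := h.continuous_deriv
  have hint : ∀ {u : ℝ → ℂ}, Continuous u → IntervalIntegrable u volume (-1) 1 :=
    fun hu => hu.intervalIntegrable _ _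
  have hsplit : ∫ y in (-1 : ℝ)..1, F y * conj (X y)
      = -(∫ y in (-1 : ℝ)..1, a y * conj (X' y)) + ∫ y in (-1 : ℝ)..1, g y * conj (X y) := by
    rw [← integral_deriv_mul_conj ha h.hasDerivAt ha' hX' h.left h.right,
      ← intervalIntegral.integral_add (hint (by fun_prop)) (hint (by fun_prop))]
    exact intervalIntegral.integral_congr_Ioo_of_le (by norm_num) fun y hy => by
      simp only [hF hy, add_mul]
  have hpoincare := L2norm_le_two_mul_L2norm_deriv h.hasDerivAt hX' h.left
  have henergy : L2norm X' ^ 2 ≤ L2norm a * L2norm X' + L2norm g * (2 * L2norm X') := calc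
    L2norm X' ^ 2 ≤ L2sq X' + k ^ 2 * L2sq X := by
      rw [sq_L2norm]; exact le_add_of_nonneg_right (mul_nonneg (sq_nonneg k) (L2sq_nonneg X))
    _ = ‖∫ y in (-1 : ℝ)..1, F y * conj (X y)‖ := h.energy_eq
    _ ≤ ‖∫ y in (-1 : ℝ)..1, a y * conj (X' y)‖ + ‖∫ y in (-1 : ℝ)..1, g y * conj (X y)‖ := by
      rw [hsplit]; exact (norm_add_le _ _).trans_eq (by rw [norm_neg])
    _ ≤ L2norm a * L2norm X' + L2norm g * (2 * L2norm X') :=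
      add_le_add (norm_integral_mul_conj_le (continuous_of_forall_hasDerivAt ha) hX')
        ((norm_integral_mul_conj_le hg hX).trans
          (mul_le_mul_of_nonneg_left hpoincare (L2norm_nonneg g)))
  nlinarith [L2norm_nonneg X', L2norm_nonneg a, L2norm_nonneg g]

end IsDirichletSolution

/-- `twistedDeriv ξ f f' = e^{-iξy} ∂_y (e^{iξy} f)` when `f'` is the derivative of `f`. -/
def twistedDeriv (ξ : ℝ) (f f' : ℝ → ℂ) : ℝ → ℂ := fun y => f' y + I * ξ * f y

lemma hasDerivAt_twistedDeriv (ξ : ℝ) {f f' f'' : ℝ → ℂ} (hf : ∀ y, HasDerivAt f (f' y) y)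
    (hf' : ∀ y, HasDerivAt f' (f'' y) y) (y : ℝ) :
    HasDerivAt (twistedDeriv ξ f f') (twistedDeriv ξ f' f'' y) y :=
  (hf' y).add ((hf y).const_mul _)

lemma continuous_twistedDeriv (ξ : ℝ) {f f' : ℝ → ℂ} (hf : Continuous f) (hf' : Continuous f') :
    Continuous (twistedDeriv ξ f f') :=
  hf'.add (continuous_const.mul hf)

section Estimates

variable {k ξ : ℝ} {ψ ψ' ψ'' w w' w'' : ℝ → ℂ}

lemma L2norm_twistedDeriv_le_of_abs_le_one (hk : |k| ≤ 1) (hξ : |ξ| ≤ 1)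
    (h : IsDirichletSolution k ψ ψ' ψ'' w) (hw : Continuous w) :
    L2norm (twistedDeriv ξ ψ ψ') + L2norm (twistedDeriv ξ ψ' ψ'') ≤ 13 * L2norm w := by
  have hψ := h.continuous
  have hψ' := h.continuous_deriv
  have h₁ : L2norm ψ' ≤ 2 * L2norm w := by
    simpa [L2norm_zero] using h.L2norm_deriv_le (a := fun _ => 0) (fun _ => hasDerivAt_const _ _)
      continuous_const hw fun y _ => (zero_add (w y)).symm
  have h₀ : L2norm ψ ≤ 4 * L2norm w :=
    (L2norm_le_two_mul_L2norm_deriv h.hasDerivAt hψ' h.left).trans (by linarith)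
  have hk2 : k ^ 2 ≤ 1 := by nlinarith [sq_abs k, abs_nonneg k]
  have hP := L2norm_const_mul_add₃_le 1 (I * ξ) 0 hψ' hψ hψ
  have hP' := L2norm_const_mul_add₃_le ((k : ℂ) ^ 2) (-1) (I * ξ) hψ hw hψ'
  rw [L2norm_congr (f := twistedDeriv ξ ψ' ψ'')
    (g := fun y => (k : ℂ) ^ 2 * ψ y + -1 * w y + I * ξ * ψ' y) fun y hy => by
      simp only [twistedDeriv]; linear_combination h.eq y hy]
  simp only [one_mul, zero_mul, add_zero, norm_one, norm_zero, norm_neg, norm_mul, norm_pow,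
    norm_I, norm_real, Real.norm_eq_abs, sq_abs] at hP hP'
  unfold twistedDeriv
  nlinarith [mul_le_mul hξ h₀ (L2norm_nonneg ψ) zero_le_one,
    mul_le_mul hk2 h₀ (L2norm_nonneg ψ) zero_le_one,
    mul_le_mul hξ h₁ (L2norm_nonneg ψ') zero_le_one]

lemma L2norm_corrector_deriv_le (hξ : ξ ≠ 0) (h : IsDirichletSolution k ψ ψ' ψ'' w)
    (hw : ∀ y, HasDerivAt w (w' y) y) (hw' : ∀ y, HasDerivAt w' (w'' y) y)
    (hw'' : Continuous w'') (hw₀ : w (-1) = 0) (hw₁ : w 1 = 0) {N : ℝ}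
    (hA : L2norm (twistedDeriv ξ w w') ≤ N)
    (hB : L2norm (twistedDeriv ξ (twistedDeriv ξ w w') (twistedDeriv ξ w' w'')) ≤ N) :
    (k ^ 2 + ξ ^ 2) * L2norm (fun y => ψ' y - ((k ^ 2 + ξ ^ 2 : ℝ) : ℂ)⁻¹ * w' y) ≤ 4 * N := by
  set κ : ℝ := k ^ 2 + ξ ^ 2 with hκ_def
  have hκ : 0 < κ := by positivity
  have hκc : (κ : ℂ) ≠ 0 := ofReal_ne_zero.2 hκ.ne'
  have hκ' : (κ : ℂ) = k ^ 2 + ξ ^ 2 := by push_cast [hκ_def]; rfl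
  have hR := h.sub_const_mul (isDirichletSolution_of_hasDerivAt hw hw' hw'' hw₀ hw₁) (κ : ℂ)⁻¹
  have hcA := continuous_twistedDeriv ξ (continuous_of_forall_hasDerivAt hw)
    (continuous_of_forall_hasDerivAt hw')
  have hcA' := continuous_twistedDeriv ξ (continuous_of_forall_hasDerivAt hw') hw''
  -- The source `(w'' + ξ²w) / κ` of `ψ - w / κ` equals `(2 A' - B) / κ`.
  have := hR.L2norm_deriv_le (a := fun y => (2 * (κ : ℂ)⁻¹) * twistedDeriv ξ w w' y)
    (g := fun y => (-(κ : ℂ)⁻¹) * twistedDeriv ξ (twistedDeriv ξ w w') (twistedDeriv ξ w' w'') y)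
    (fun y => (hasDerivAt_twistedDeriv ξ hw hw' y).const_mul _) (by fun_prop)
    (continuous_const.mul (continuous_twistedDeriv ξ hcA hcA')) fun y _ => by
      simp only [twistedDeriv]
      field_simp
      linear_combination w y * hκ' + (ξ ^ 2 * w y) * I_sq
  simp only [L2norm_const_mul, norm_mul, norm_neg, norm_inv, norm_real, Real.norm_eq_abs,
    abs_of_pos hκ, Complex.norm_ofNat] at this
  calc κ * L2norm (fun y => ψ' y - (κ : ℂ)⁻¹ * w' y)
      ≤ κ * (2 * κ⁻¹ * L2norm (twistedDeriv ξ w w') + 2 * (κ⁻¹ *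
        L2norm (twistedDeriv ξ (twistedDeriv ξ w w') (twistedDeriv ξ w' w'')))) := by gcongr
    _ ≤ 4 * N := by field_simp; linarith

lemma abs_mul_L2norm_twistedDeriv_le_corrector (hk : |k| ≤ 1) (hξ : 1 ≤ |ξ|)
    (h : IsDirichletSolution k ψ ψ' ψ'' w) (hw : Continuous w) (hw' : Continuous w') :
    |ξ| * (L2norm (twistedDeriv ξ ψ ψ') + L2norm (twistedDeriv ξ ψ' ψ''))
      ≤ 2 * ((k ^ 2 + ξ ^ 2) * L2norm (fun y => ψ' y - ((k ^ 2 + ξ ^ 2 : ℝ) : ℂ)⁻¹ * w' y)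
        + (k ^ 2 + ξ ^ 2) * L2norm (fun y => ψ y - ((k ^ 2 + ξ ^ 2 : ℝ) : ℂ)⁻¹ * w y)
        + L2norm (twistedDeriv ξ w w')) := by
  set κ : ℝ := k ^ 2 + ξ ^ 2 with hκ_def
  have hκ : 0 < κ := by nlinarith [sq_abs ξ, sq_nonneg k]
  have hκc : (κ : ℂ) ≠ 0 := ofReal_ne_zero.2 hκ.ne'
  have hκ' : (κ : ℂ) = k ^ 2 + ξ ^ 2 := by push_cast [hκ_def]; rfl
  have hψ := h.continuous
  have hψ' := h.continuous_deriv
  have hR : Continuous fun y => ψ y - (κ : ℂ)⁻¹ * w y := by fun_prop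
  have hR' : Continuous fun y => ψ' y - (κ : ℂ)⁻¹ * w' y := by fun_prop
  have hA := continuous_twistedDeriv ξ hw hw'
  have hP := L2norm_const_mul_add₃_le 1 (I * ξ) (κ : ℂ)⁻¹ hR' hR hA
  have hP' := L2norm_const_mul_add₃_le ((k : ℂ) ^ 2) (I * ξ) (I * ξ * (κ : ℂ)⁻¹) hR hR' hA
  rw [L2norm_congr (f := twistedDeriv ξ ψ ψ') (g := fun y => 1 * (ψ' y - (κ : ℂ)⁻¹ * w' y)
      + I * ξ * (ψ y - (κ : ℂ)⁻¹ * w y) + (κ : ℂ)⁻¹ * twistedDeriv ξ w w' y) fun y _ => by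
        simp only [twistedDeriv]; ring,
    L2norm_congr (f := twistedDeriv ξ ψ' ψ'') (g := fun y => (k : ℂ) ^ 2 * (ψ y - (κ : ℂ)⁻¹ * w y)
      + I * ξ * (ψ' y - (κ : ℂ)⁻¹ * w' y) + I * ξ * (κ : ℂ)⁻¹ * twistedDeriv ξ w w' y)
      fun y hy => by
        simp only [twistedDeriv]
        field_simp
        linear_combination (κ : ℂ) * h.eq y hy - w y * hκ' - (ξ ^ 2 * w y) * I_sq]
  refine (mul_le_mul_of_nonneg_left (add_le_add hP hP') (abs_nonneg ξ)).trans ?_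
  simp only [norm_one, one_mul, norm_pow, norm_mul, norm_I, norm_inv, norm_real,
    Real.norm_eq_abs, abs_of_pos hκ, sq_abs]
  have hc₁ : |ξ| + |ξ| ^ 2 ≤ 2 * κ := by nlinarith [sq_abs ξ, sq_nonneg k]
  have hc₂ : |ξ| ^ 2 + |ξ| * k ^ 2 ≤ 2 * κ := by
    have hk2 : k ^ 2 ≤ 1 := by nlinarith [sq_abs k, abs_nonneg k]
    nlinarith [sq_abs ξ, mul_le_mul_of_nonneg_left hk2 (abs_nonneg ξ)]
  have ha : κ * (κ⁻¹ * L2norm (twistedDeriv ξ w w')) = L2norm (twistedDeriv ξ w w') := by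
    field_simp
  nlinarith [mul_le_mul_of_nonneg_right hc₁ (L2norm_nonneg fun y => ψ' y - (κ : ℂ)⁻¹ * w' y),
    mul_le_mul_of_nonneg_right hc₂ (L2norm_nonneg fun y => ψ y - (κ : ℂ)⁻¹ * w y),
    mul_le_mul_of_nonneg_right hc₁
      (mul_nonneg (inv_nonneg.2 hκ.le) (L2norm_nonneg (twistedDeriv ξ w w')))]

lemma L2norm_twistedDeriv_le_of_one_le_abs (hk : |k| ≤ 1) (hξ : 1 ≤ |ξ|)
    (h : IsDirichletSolution k ψ ψ' ψ'' w) (hw : ∀ y, HasDerivAt w (w' y) y)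
    (hw' : ∀ y, HasDerivAt w' (w'' y) y) (hw'' : Continuous w'') (hw₀ : w (-1) = 0)
    (hw₁ : w 1 = 0) {N : ℝ} (hA : L2norm (twistedDeriv ξ w w') ≤ N)
    (hB : L2norm (twistedDeriv ξ (twistedDeriv ξ w w') (twistedDeriv ξ w' w'')) ≤ N) :
    |ξ| * (L2norm (twistedDeriv ξ ψ ψ') + L2norm (twistedDeriv ξ ψ' ψ'')) ≤ 26 * N := by
  have hR' := L2norm_corrector_deriv_le (abs_pos.1 (by linarith)) h hw hw' hw'' hw₀ hw₁ hA hB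
  have hR := h.sub_const_mul (isDirichletSolution_of_hasDerivAt hw hw' hw'' hw₀ hw₁)
    ((k ^ 2 + ξ ^ 2 : ℝ) : ℂ)⁻¹
  have hR₀ := L2norm_le_two_mul_L2norm_deriv hR.hasDerivAt hR.continuous_deriv hR.left
  have := abs_mul_L2norm_twistedDeriv_le_corrector hk hξ h (continuous_of_forall_hasDerivAt hw)
    (continuous_of_forall_hasDerivAt hw')
  nlinarith [mul_le_mul_of_nonneg_left hR₀ (by positivity : (0 : ℝ) ≤ k ^ 2 + ξ ^ 2)]

theorem sqrt_L2sq_twistedDeriv_le (hk : |k| ≤ 1) (h : IsDirichletSolution k ψ ψ' ψ'' w)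
    (hw : ∀ y, HasDerivAt w (w' y) y) (hw' : ∀ y, HasDerivAt w' (w'' y) y)
    (hw'' : Continuous w'') (hw₀ : w (-1) = 0) (hw₁ : w 1 = 0) :
    √(L2sq (twistedDeriv ξ ψ' ψ'') + L2sq (twistedDeriv ξ ψ ψ'))
      ≤ 52 * (1 + |ξ|)⁻¹ * √(L2sq (twistedDeriv ξ (twistedDeriv ξ w w') (twistedDeriv ξ w' w''))
        + L2sq (twistedDeriv ξ w w') + L2sq w) := by
  set A := twistedDeriv ξ w w'
  set B := twistedDeriv ξ (twistedDeriv ξ w w') (twistedDeriv ξ w' w'')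
  set N := √(L2sq B + L2sq A + L2sq w)
  have hA : L2norm A ≤ N := Real.sqrt_le_sqrt (by linarith [L2sq_nonneg w, L2sq_nonneg B])
  have hB : L2norm B ≤ N := Real.sqrt_le_sqrt (by linarith [L2sq_nonneg w, L2sq_nonneg A])
  have hW : L2norm w ≤ N := Real.sqrt_le_sqrt (by linarith [L2sq_nonneg A, L2sq_nonneg B])
  have hP := L2norm_nonneg (twistedDeriv ξ ψ ψ')
  have hP' := L2norm_nonneg (twistedDeriv ξ ψ' ψ'')
  have hsum : (1 + |ξ|) * (L2norm (twistedDeriv ξ ψ ψ') + L2norm (twistedDeriv ξ ψ' ψ''))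
      ≤ 52 * N := by
    rcases le_total |ξ| 1 with hξ | hξ
    · have := L2norm_twistedDeriv_le_of_abs_le_one hk hξ h (continuous_of_forall_hasDerivAt hw)
      nlinarith [L2norm_nonneg w]
    · have := L2norm_twistedDeriv_le_of_one_le_abs hk hξ h hw hw' hw'' hw₀ hw₁ hA hB
      nlinarith
  have hsqrt : √(L2sq (twistedDeriv ξ ψ' ψ'') + L2sq (twistedDeriv ξ ψ ψ'))
      ≤ L2norm (twistedDeriv ξ ψ ψ') + L2norm (twistedDeriv ξ ψ' ψ'') := by
    rw [← sq_L2norm, ← sq_L2norm]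
    exact Real.sqrt_le_iff.2 ⟨add_nonneg hP hP', by nlinarith⟩
  rw [show 52 * (1 + |ξ|)⁻¹ * N = 52 * N / (1 + |ξ|) by ring, le_div_iff₀ (by positivity)]
  nlinarith [mul_le_mul_of_nonneg_right hsqrt (by positivity : (0 : ℝ) ≤ 1 + |ξ|)]

end Estimates

lemma hasDerivAt_ew (k t : ℝ) {f f' : ℝ → ℂ} (hf : ∀ y, HasDerivAt f (f' y) y) (y : ℝ) :
    HasDerivAt (ew k t f) (ew k t (twistedDeriv (k * t) f f') y) y := by
  have he : HasDerivAt (fun y : ℝ => exp (I * k * y * t))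
      (exp (I * k * y * t) * (I * k * t)) y := by
    simpa using ((((hasDerivAt_id y).ofReal_comp).const_mul (I * k)).mul_const (t : ℂ)).cexp
  exact (he.mul (hf y)).congr_deriv (by simp only [ew, twistedDeriv]; push_cast; ring)

lemma deriv_ew (k t : ℝ) {f f' : ℝ → ℂ} (hf : ∀ y, HasDerivAt f (f' y) y) :
    deriv (ew k t f) = ew k t (twistedDeriv (k * t) f f') :=
  funext fun y => (hasDerivAt_ew k t hf y).deriv

lemma L2sq_ew (k t : ℝ) (f : ℝ → ℂ) : L2sq (ew k t f) = L2sq f := by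
  refine intervalIntegral.integral_congr fun y _ => ?_
  have : I * k * y * t = (k * y * t : ℝ) * I := by push_cast; ring
  simp only [ew, norm_mul, this, norm_exp_ofReal_mul_I, one_mul]

lemma hasDerivAt_deriv_of_contDiff_two {E : Type*} [NormedAddCommGroup E] [NormedSpace ℝ E]
    {f : ℝ → E} (hf : ContDiff ℝ 2 f) :
    (∀ y, HasDerivAt f (deriv f y) y) ∧ (∀ y, HasDerivAt (deriv f) (deriv (deriv f) y) y) ∧
      Continuous (deriv (deriv f)) :=
  ⟨fun y => (hf.differentiable (by norm_num) y).hasDerivAt,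
    fun y => (hf.differentiable_deriv_two y).hasDerivAt,
    (hf.deriv' (n := 1)).continuous_deriv_one⟩

end LowFreq

open LowFreq in
/-- Low-frequency estimate for `ψ₁ = ∂_y ψ + ikt ψ`:
`‖(∂_y,1)ψ₁‖ ≤ C (1+|k|t)^{-1} ‖(∂_y,1)²(e^{ikyt}w)‖` for `0 < |k| ≤ 1`. -/
theorem psi1_lowfreq :
    ∃ C > (0 : ℝ), ∀ (k t : ℝ) (ψ w : ℝ → ℂ),
      k ≠ 0 → |k| ≤ 1 → 0 ≤ t →
      ContDiff ℝ 3 ψ → ContDiff ℝ 2 w →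
      ψ (-1) = 0 → ψ 1 = 0 → w (-1) = 0 → w 1 = 0 →
      (∀ y ∈ Ioo (-1 : ℝ) 1, deriv (deriv ψ) y - (k : ℂ) ^ 2 * ψ y = -w y) →
      Real.sqrt
          (L2sq (deriv (fun y => deriv ψ y + Complex.I * (k : ℂ) * (t : ℂ) * ψ y))
            + L2sq (fun y => deriv ψ y + Complex.I * (k : ℂ) * (t : ℂ) * ψ y))
        ≤ C * (1 + |k| * t)⁻¹ * Real.sqrt
            (L2sq (deriv (deriv (ew k t w))) + L2sq (deriv (ew k t w)) + L2sq w) := by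
  refine ⟨52, by norm_num, fun k t ψ w _ hk ht hψ hw hψ₀ hψ₁ hw₀ hw₁ heq => ?_⟩
  obtain ⟨hψ', hψ'', hcψ''⟩ := hasDerivAt_deriv_of_contDiff_two (hψ.of_le (by norm_num))
  obtain ⟨hw', hw'', hcw''⟩ := hasDerivAt_deriv_of_contDiff_two hw
  have htwist : (fun y => deriv ψ y + Complex.I * k * t * ψ y)
      = twistedDeriv (k * t) ψ (deriv ψ) := by
    funext y; simp only [twistedDeriv]; push_cast; ring
  rw [htwist, funext fun y => (hasDerivAt_twistedDeriv (k * t) hψ' hψ'' y).deriv, deriv_ew k t hw',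
    deriv_ew k t (hasDerivAt_twistedDeriv (k * t) hw' hw''), L2sq_ew, L2sq_ew,
    show |k| * t = |k * t| by rw [abs_mul, abs_of_nonneg ht]]
  exact sqrt_L2sq_twistedDeriv_le hk ⟨hψ', hψ'', hcψ'', hψ₀, hψ₁, heq⟩ hw' hw'' hcw'' hw₀ hw₁
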